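/- Let N ≥ 1, T > 0, and f ∈ C([0,T], C_{b,u}(ℝ^N)). Define v(t) = ∫₀ᵗ K(t-s,·) ⋆ f(s) ds for 0 < t ≤ T and v(0) = 0. Then for every γ ∈ (0,1) the map v : [0,T] → C_{b,u}(ℝ^N) is Hölder continuous with exponent γ: there is a constant C = C(N, γ, T, sup_{0≤s≤T} ‖f(s)‖_{L^∞}) such that ‖v(t) − v(s)‖_{L^∞} ≤ C|t − s|^γ for all s, t ∈ [0,T]. -/

import Mathlib

/-!
Write `e^{τΔ} g = K(τ, ·) ⋆ g`. As `K(τ, ·)` is a probability density, `|e^{τΔ} g| ≤ sup |g|`.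
Differentiating in time, `|∂_τ K(τ, z)| ≲ b⁻¹ K(4b, z)` for `b ≤ τ ≤ 2b`, so
`|e^{aΔ} g - e^{bΔ} g| ≲ ((a - b) / b) sup |g|` when `b ≤ a ≤ 2b`; interpolating with the trivial
bound `2 sup |g|` gives `≲ ((a - b) / b)^γ sup |g|` for all `0 < b ≤ a`. For `s ≤ t`,
`v(t) - v(s) = ∫₀ˢ (e^{(t-r)Δ} - e^{(s-r)Δ}) f(r) dr + ∫ₛᵗ e^{(t-r)Δ} f(r) dr`; the first integral
is `≲ (t - s)^γ ∫₀ˢ (s - r)^{-γ} dr`, finite because `γ < 1`, and the second is `≤ (t - s) sup |f|`.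
-/

open MeasureTheory Real Set Filter ENNReal

/-- The Gaussian heat kernel `K(t,x) = (4πt)^{-N/2} exp(-|x|²/(4t))` on `ℝ^N`. -/
noncomputable def gaussK (N : ℕ) (t : ℝ) (x : EuclideanSpace ℝ (Fin N)) : ℝ :=
  (4 * π * t) ^ (-(N : ℝ) / 2) * Real.exp (-‖x‖ ^ 2 / (4 * t))

/-- The Duhamel term `v(t,x) = ∫₀ᵗ ∫ K(t-s, x-y) f(s,y) dy ds` (with `v(0,·) = 0`). -/
noncomputable def duhamel (N : ℕ) (f : ℝ → EuclideanSpace ℝ (Fin N) → ℝ) (t : ℝ)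
    (x : EuclideanSpace ℝ (Fin N)) : ℝ :=
  ∫ s in Ioo (0 : ℝ) t, ∫ y, gaussK N (t - s) (x - y) * f s y

section HeatKernel

variable {N : ℕ}

local notation "E" => EuclideanSpace ℝ (Fin N)

lemma gaussK_nonneg {t : ℝ} (ht : 0 ≤ t) (x : E) : 0 ≤ gaussK N t x := by
  unfold gaussK; positivity

lemma integral_gaussK {t : ℝ} (ht : 0 < t) : ∫ x : E, gaussK N t x = 1 := by
  have h4πt : 0 < 4 * π * t := by positivity
  have hexp : ∀ x : E, rexp (-‖x‖ ^ 2 / (4 * t)) = rexp (-(1 / (4 * t)) * ‖x‖ ^ 2) :=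
    fun x => by congr 1; ring
  simp only [gaussK, hexp, integral_const_mul,
    GaussianFourier.integral_rexp_neg_mul_sq_norm (one_div_pos.2 (by positivity : 0 < 4 * t)),
    finrank_euclideanSpace_fin]
  rw [show π / (1 / (4 * t)) = 4 * π * t by field_simp, ← rpow_add h4πt]
  simp [neg_div]

lemma integrable_gaussK {t : ℝ} (ht : 0 < t) : Integrable (gaussK N t) :=
  .of_integral_ne_zero (by simp [integral_gaussK ht])

lemma hasDerivAt_gaussK {τ : ℝ} (hτ : 0 < τ) (z : E) :
    HasDerivAt (fun t => gaussK N t z)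
      (gaussK N τ z * (‖z‖ ^ 2 / (4 * τ ^ 2) - N / (2 * τ))) τ := by
  have h4πτ : 0 < 4 * π * τ := by positivity
  have hlin : HasDerivAt (fun t : ℝ => 4 * π * t) (4 * π) τ := by
    simpa using (hasDerivAt_id' τ).const_mul (4 * π)
  have hpow : HasDerivAt (fun t : ℝ => (4 * π * t) ^ (-(N : ℝ) / 2))
      (-(N : ℝ) / 2 * (4 * π * τ) ^ (-(N : ℝ) / 2 - 1) * (4 * π)) τ :=
    (hasDerivAt_rpow_const (Or.inl h4πτ.ne')).comp τ hlin
  have hexp : HasDerivAt (fun t : ℝ => rexp (-‖z‖ ^ 2 / (4 * t)))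
      (rexp (-‖z‖ ^ 2 / (4 * τ)) * (‖z‖ ^ 2 / (4 * τ ^ 2))) τ := by
    convert ((hasDerivAt_inv hτ.ne').const_mul (-‖z‖ ^ 2 / 4)).exp using 1
    · funext t; congr 1; ring
    · congr 1
      · congr 1; ring
      · field_simp
  refine (hpow.mul hexp).congr_deriv ?_
  unfold gaussK
  rw [rpow_sub h4πτ, Real.rpow_one]
  field_simp
  ring

lemma mul_exp_neg_div_le (u : ℝ) {c : ℝ} (hc : 0 < c) : u * rexp (-(u / c)) ≤ c := by
  have h : u / c ≤ rexp (u / c) := by linarith [add_one_le_exp (u / c)]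
  rw [exp_neg, ← div_eq_mul_inv, div_le_iff₀ (exp_pos _)]
  rw [div_le_iff₀ hc] at h
  linarith

-- Half of the Gaussian decay of `K(τ, z)` goes into `K(4b, z)`; the spare factor
-- `exp(-‖z‖²/(16b))` absorbs the `‖z‖²` produced by the time derivative.
lemma gaussK_le {b τ : ℝ} (hb : 0 < b) (hbτ : b ≤ τ) (hτ : τ ≤ 2 * b) (z : E) :
    gaussK N τ z ≤ 2 ^ N * gaussK N (4 * b) z * rexp (-(‖z‖ ^ 2 / (16 * b))) := by
  have hτ0 : 0 < τ := hb.trans_le hbτ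
  have h4 : (2 : ℝ) ^ N * 4 ^ (-(N : ℝ) / 2) = 1 := by
    rw [show (4 : ℝ) = 2 ^ (2 : ℝ) by norm_num, ← rpow_mul zero_le_two, ← Real.rpow_natCast,
      ← rpow_add two_pos]
    ring_nf; simp
  have hprefactor :
      (4 * π * τ) ^ (-(N : ℝ) / 2) ≤ 2 ^ N * (4 * π * (4 * b)) ^ (-(N : ℝ) / 2) := by
    calc (4 * π * τ) ^ (-(N : ℝ) / 2) ≤ (4 * π * b) ^ (-(N : ℝ) / 2) :=
          rpow_le_rpow_of_nonpos (by positivity) (by gcongr)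
            (by simp only [neg_div, neg_nonpos]; positivity)
      _ = 2 ^ N * (4 * π * (4 * b)) ^ (-(N : ℝ) / 2) := by
          rw [show 4 * π * (4 * b) = 4 * (4 * π * b) by ring,
            Real.mul_rpow (x := 4) (by norm_num) (by positivity), ← mul_assoc, h4, one_mul]
  have hgauss : rexp (-‖z‖ ^ 2 / (4 * τ))
      ≤ rexp (-‖z‖ ^ 2 / (4 * (4 * b))) * rexp (-(‖z‖ ^ 2 / (16 * b))) := by
    rw [← exp_add, exp_le_exp, show -‖z‖ ^ 2 / (4 * (4 * b)) + -(‖z‖ ^ 2 / (16 * b))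
      = -(‖z‖ ^ 2 / (8 * b)) by ring, neg_div, neg_le_neg_iff]
    exact div_le_div_of_nonneg_left (by positivity) (by positivity) (by linarith)
  calc gaussK N τ z
      ≤ (2 ^ N * (4 * π * (4 * b)) ^ (-(N : ℝ) / 2))
        * (rexp (-‖z‖ ^ 2 / (4 * (4 * b))) * rexp (-(‖z‖ ^ 2 / (16 * b)))) :=
        mul_le_mul hprefactor hgauss (exp_pos _).le (by positivity)
    _ = 2 ^ N * gaussK N (4 * b) z * rexp (-(‖z‖ ^ 2 / (16 * b))) := by
        simp only [gaussK]; ring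

lemma abs_deriv_gaussK_le {b τ : ℝ} (hb : 0 < b) (hbτ : b ≤ τ) (hτ : τ ≤ 2 * b) (z : E) :
    |gaussK N τ z * (‖z‖ ^ 2 / (4 * τ ^ 2) - N / (2 * τ))|
      ≤ 2 ^ N * (N / 2 + 4) / b * gaussK N (4 * b) z := by
  have hτ0 : 0 < τ := hb.trans_le hbτ
  set X := rexp (-(‖z‖ ^ 2 / (16 * b)))
  have hX1 : X ≤ 1 := exp_le_one_iff.2 (by simp only [neg_nonpos]; positivity)
  have hXz : ‖z‖ ^ 2 * X ≤ 16 * b := mul_exp_neg_div_le _ (by positivity)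
  have hK4b := gaussK_nonneg (N := N) (by positivity : 0 ≤ 4 * b) z
  have hfactor :
      |‖z‖ ^ 2 / (4 * τ ^ 2) - N / (2 * τ)| ≤ ‖z‖ ^ 2 / (4 * b ^ 2) + N / (2 * b) := by
    have h1 : ‖z‖ ^ 2 / (4 * τ ^ 2) ≤ ‖z‖ ^ 2 / (4 * b ^ 2) := by gcongr
    have h2 : (N : ℝ) / (2 * τ) ≤ N / (2 * b) := by gcongr
    rw [abs_le]; constructor <;> nlinarith [show 0 ≤ ‖z‖ ^ 2 / (4 * τ ^ 2) by positivity,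
      show 0 ≤ (N : ℝ) / (2 * τ) by positivity]
  calc |gaussK N τ z * (‖z‖ ^ 2 / (4 * τ ^ 2) - N / (2 * τ))|
      ≤ (2 ^ N * gaussK N (4 * b) z * X) * (‖z‖ ^ 2 / (4 * b ^ 2) + N / (2 * b)) := by
        rw [abs_mul, abs_of_nonneg (gaussK_nonneg hτ0.le z)]
        exact mul_le_mul (gaussK_le hb hbτ hτ z) hfactor (abs_nonneg _) (by positivity)
    _ = 2 ^ N * gaussK N (4 * b) z * ((‖z‖ ^ 2 * X) / (4 * b ^ 2) + X * (N / (2 * b))) := by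
        ring
    _ ≤ 2 ^ N * gaussK N (4 * b) z * ((16 * b) / (4 * b ^ 2) + 1 * (N / (2 * b))) := by
        gcongr
    _ = 2 ^ N * (N / 2 + 4) / b * gaussK N (4 * b) z := by
        field_simp; ring

lemma abs_gaussK_sub_le {a b : ℝ} (hb : 0 < b) (hba : b ≤ a) (ha : a ≤ 2 * b) (z : E) :
    |gaussK N a z - gaussK N b z|
      ≤ 2 ^ N * (N / 2 + 4) / b * gaussK N (4 * b) z * (a - b) := by
  have h := (convex_Icc b a).norm_image_sub_le_of_norm_hasDerivWithin_le
    (fun τ hτ => (hasDerivAt_gaussK (hb.trans_le hτ.1) z).hasDerivWithinAt)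
    (fun τ hτ => (abs_deriv_gaussK_le hb hτ.1 (hτ.2.trans ha) z).trans_eq' (norm_eq_abs _))
    (left_mem_Icc.2 hba) (right_mem_Icc.2 hba)
  simpa only [norm_eq_abs, abs_of_nonneg (sub_nonneg.2 hba)] using h

lemma continuousOn_gaussK :
    ContinuousOn (fun p : ℝ × E => gaussK N p.1 p.2) (Ioi 0 ×ˢ univ) := by
  have hlin : Continuous fun p : ℝ × E => 4 * p.1 := continuous_const.mul continuous_fst
  refine ContinuousOn.mul ?_ ?_
  · refine ((continuous_const.mul continuous_fst).continuousOn).rpow_const fun p hp => Or.inl ?_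
    have : 0 < p.1 := hp.1
    exact (by positivity : 0 < 4 * π * p.1).ne'
  · refine continuous_exp.comp_continuousOn
      (((continuous_norm.comp continuous_snd).pow 2).neg.continuousOn.div hlin.continuousOn
        fun p hp => ?_)
    have : 0 < p.1 := hp.1
    positivity

end HeatKernel

lemma abs_integral_mul_le_of_abs_le {G : Type*} [MeasurableSpace G] [AddGroup G]
    [MeasurableAdd G] [MeasurableNeg G] {μ : Measure G} [μ.IsNegInvariant] [μ.IsAddLeftInvariant]
    {k h g : G → ℝ} {M : ℝ} (hh : Integrable h μ) (hkh : ∀ z, |k z| ≤ h z)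
    (hgM : ∀ y, |g y| ≤ M) (x : G) :
    |∫ y, k (x - y) * g y ∂μ| ≤ M * ∫ z, h z ∂μ := by
  have hM : 0 ≤ M := (abs_nonneg _).trans (hgM x)
  calc |∫ y, k (x - y) * g y ∂μ| ≤ ∫ y, M * h (x - y) ∂μ :=
        norm_integral_le_of_norm_le ((hh.comp_sub_left x).const_mul M) (.of_forall fun y => by
          rw [norm_eq_abs, abs_mul, mul_comm]
          exact mul_le_mul (hgM y) (hkh _) (abs_nonneg _) hM)
    _ = M * ∫ z, h z ∂μ := by rw [integral_const_mul, integral_sub_left_eq_self]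

noncomputable def heatSemigroup (N : ℕ) (t : ℝ) (g : EuclideanSpace ℝ (Fin N) → ℝ)
    (x : EuclideanSpace ℝ (Fin N)) : ℝ :=
  ∫ y, gaussK N t (x - y) * g y

section HeatSemigroup

variable {N : ℕ} {g : EuclideanSpace ℝ (Fin N) → ℝ} {M : ℝ}

local notation "E" => EuclideanSpace ℝ (Fin N)

lemma abs_heatSemigroup_le {t : ℝ} (ht : 0 < t) (hgM : ∀ y, |g y| ≤ M) (x : E) :
    |heatSemigroup N t g x| ≤ M := by
  simpa [heatSemigroup, integral_gaussK ht] using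
    abs_integral_mul_le_of_abs_le (integrable_gaussK ht)
      (fun z => (abs_of_nonneg (gaussK_nonneg ht.le z)).le) hgM x

lemma abs_heatSemigroup_sub_le {a b : ℝ} (hb : 0 < b) (hba : b ≤ a) (ha : a ≤ 2 * b)
    (hg : AEStronglyMeasurable g) (hgM : ∀ y, |g y| ≤ M) (x : E) :
    |heatSemigroup N a g x - heatSemigroup N b g x|
      ≤ M * (2 ^ N * (N / 2 + 4)) * ((a - b) / b) := by
  have hint : ∀ {t : ℝ}, 0 < t → Integrable (fun y => gaussK N t (x - y) * g y) := fun ht =>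
    ((integrable_gaussK ht).comp_sub_left x).mul_bdd hg (.of_forall hgM)
  have hdiff : heatSemigroup N a g x - heatSemigroup N b g x
      = ∫ y, (fun z => gaussK N a z - gaussK N b z) (x - y) * g y := by
    simp only [heatSemigroup, sub_mul]
    exact (integral_sub (hint (hb.trans_le hba)) (hint hb)).symm
  have hbound := abs_integral_mul_le_of_abs_le
    (((integrable_gaussK (N := N) (by positivity : 0 < 4 * b)).const_mul
      (2 ^ N * (N / 2 + 4) / b)).mul_const (a - b))
    (abs_gaussK_sub_le hb hba ha) hgM x
  rw [hdiff]
  refine hbound.trans_eq ?_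
  rw [integral_mul_const, integral_const_mul, integral_gaussK (by positivity)]
  ring

lemma abs_heatSemigroup_sub_le_rpow {a b γ : ℝ} (hb : 0 < b) (hba : b ≤ a) (hγ0 : 0 ≤ γ)
    (hγ1 : γ ≤ 1) (hg : AEStronglyMeasurable g) (hgM : ∀ y, |g y| ≤ M) (x : E) :
    |heatSemigroup N a g x - heatSemigroup N b g x|
      ≤ M * (2 + 2 ^ N * (N / 2 + 4)) * ((a - b) / b) ^ γ := by
  have hM : 0 ≤ M := (abs_nonneg _).trans (hgM x)
  have hρ : 0 ≤ (a - b) / b := div_nonneg (by linarith) hb.le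
  rcases le_or_gt a (2 * b) with ha | ha
  · have hρ1 : (a - b) / b ≤ 1 := by rw [div_le_one hb]; linarith
    calc |heatSemigroup N a g x - heatSemigroup N b g x|
        ≤ M * (2 ^ N * (N / 2 + 4)) * ((a - b) / b) :=
          abs_heatSemigroup_sub_le hb hba ha hg hgM x
      _ ≤ M * (2 + 2 ^ N * (N / 2 + 4)) * ((a - b) / b) ^ γ := by
          gcongr
          · linarith
          · simpa using rpow_le_rpow_of_exponent_ge' hρ hρ1 hγ0 hγ1
  · have hρ1 : 1 ≤ (a - b) / b := by rw [le_div_iff₀ hb]; linarith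
    calc |heatSemigroup N a g x - heatSemigroup N b g x|
        ≤ |heatSemigroup N a g x| + |heatSemigroup N b g x| := abs_sub _ _
      _ ≤ M * 2 := by
          linarith [abs_heatSemigroup_le (hb.trans_le hba) hgM x, abs_heatSemigroup_le hb hgM x]
      _ ≤ M * ((2 + 2 ^ N * (N / 2 + 4)) * ((a - b) / b) ^ γ) := by
          refine mul_le_mul_of_nonneg_left ?_ hM
          nlinarith [one_le_rpow hρ1 hγ0, show (0 : ℝ) ≤ 2 ^ N * (N / 2 + 4) by positivity]
      _ = M * (2 + 2 ^ N * (N / 2 + 4)) * ((a - b) / b) ^ γ := by ring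

end HeatSemigroup

lemma continuousOn_uncurry_of_uniform {α β γ : Type*} [PseudoMetricSpace α]
    [PseudoMetricSpace β] [PseudoMetricSpace γ] {F : α → β → γ} {s : Set α}
    (hcont : ∀ a ∈ s, Continuous (F a))
    (hunif : ∀ a ∈ s, ∀ ε > 0, ∃ η > 0, ∀ b ∈ s, dist b a < η → ∀ x, dist (F b x) (F a x) ≤ ε) :
    ContinuousOn (Function.uncurry F) (s ×ˢ univ) := by
  rintro ⟨a, x⟩ ⟨ha, -⟩
  rw [Metric.continuousWithinAt_iff]
  intro ε hε
  obtain ⟨η, hη, hFη⟩ := hunif a ha (ε / 2) (half_pos hε)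
  obtain ⟨δ, hδ, hFδ⟩ := Metric.continuous_iff.1 (hcont a ha) x (ε / 2) (half_pos hε)
  refine ⟨min η δ, lt_min hη hδ, fun {q} hq hqa => ?_⟩
  rw [Prod.dist_eq, max_lt_iff, lt_min_iff, lt_min_iff] at hqa
  obtain ⟨⟨hq1, -⟩, -, hq2⟩ := hqa
  calc dist (F q.1 q.2) (F a x) ≤ dist (F q.1 q.2) (F a q.2) + dist (F a q.2) (F a x) :=
        dist_triangle _ _ _
    _ < ε / 2 + ε / 2 := add_lt_add_of_le_of_lt (hFη q.1 hq.1 hq1 q.2) (hFδ q.2 hq2)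
    _ = ε := add_halves ε

lemma intervalIntegrable_sub_rpow_neg {s γ : ℝ} (hγ : γ < 1) :
    IntervalIntegrable (fun r => (s - r) ^ (-γ)) volume 0 s := by
  simpa using ((intervalIntegral.intervalIntegrable_rpow' (r := -γ) (a := 0) (b := s)
    (by linarith)).comp_sub_left s).symm

lemma integral_sub_rpow_neg {s γ : ℝ} (hγ : γ < 1) :
    ∫ r in (0 : ℝ)..s, (s - r) ^ (-γ) = s ^ (1 - γ) / (1 - γ) := by
  rw [intervalIntegral.integral_comp_sub_left (fun u => u ^ (-γ)), sub_self, sub_zero,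
    integral_rpow (Or.inl (by linarith)), zero_rpow (by linarith), sub_zero, neg_add_eq_sub]

section Duhamel

variable {N : ℕ} {f : ℝ → EuclideanSpace ℝ (Fin N) → ℝ} {M : ℝ}

local notation "E" => EuclideanSpace ℝ (Fin N)

lemma aestronglyMeasurable_duhamel_integrand {t : ℝ}
    (hf : ContinuousOn (Function.uncurry f) (Ioo 0 t ×ˢ univ)) (x : E) :
    AEStronglyMeasurable (fun r => heatSemigroup N (t - r) (f r) x)
      (volume.restrict (Ioo 0 t)) := by
  have hK : ContinuousOn (fun p : ℝ × E => gaussK N (t - p.1) (x - p.2)) (Ioo 0 t ×ˢ univ) :=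
    continuousOn_gaussK.comp ((continuous_const.sub continuous_fst).prodMk
      (continuous_const.sub continuous_snd)).continuousOn
      fun p hp => ⟨sub_pos.2 hp.1.2, mem_univ _⟩
  have h := (hK.mul hf).aestronglyMeasurable (μ := volume)
    (measurableSet_Ioo.prod MeasurableSet.univ)
  rw [Measure.volume_eq_prod, ← Measure.prod_restrict, Measure.restrict_univ] at h
  exact h.integral_prod_right'

lemma intervalIntegrable_duhamel_integrand {t : ℝ} (ht : 0 ≤ t)
    (hf : ContinuousOn (Function.uncurry f) (Ioo 0 t ×ˢ univ))
    (hM : ∀ r ∈ Ioo 0 t, ∀ y, |f r y| ≤ M) (x : E) :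
    IntervalIntegrable (fun r => heatSemigroup N (t - r) (f r) x) volume 0 t := by
  rw [intervalIntegrable_iff_integrableOn_Ioo_of_le ht]
  refine Integrable.mono' (integrableOn_const measure_Ioo_lt_top.ne)
    (aestronglyMeasurable_duhamel_integrand hf x) ?_
  filter_upwards [ae_restrict_mem measurableSet_Ioo] with r hr
  exact abs_heatSemigroup_le (sub_pos.2 hr.2) (hM r hr) x

lemma duhamel_eq_intervalIntegral {t : ℝ} (ht : 0 ≤ t) (x : E) :
    duhamel N f t x = ∫ r in 0..t, heatSemigroup N (t - r) (f r) x := by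
  rw [intervalIntegral.integral_of_le ht, duhamel]
  exact setIntegral_congr_set Ioo_ae_eq_Ioc

lemma duhamel_sub_eq {s t : ℝ} (hs : 0 ≤ s) (hst : s ≤ t)
    (hf : ContinuousOn (Function.uncurry f) (Ioo 0 t ×ˢ univ))
    (hM : ∀ r ∈ Ioo 0 t, ∀ y, |f r y| ≤ M) (x : E) :
    duhamel N f t x - duhamel N f s x
      = (∫ r in 0..s, (heatSemigroup N (t - r) (f r) x - heatSemigroup N (s - r) (f r) x))
        + ∫ r in s..t, heatSemigroup N (t - r) (f r) x := by
  have hIoo : Ioo 0 s ⊆ Ioo 0 t := Ioo_subset_Ioo_right hst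
  have hIt := intervalIntegrable_duhamel_integrand (hs.trans hst) hf hM x
  have hIs := intervalIntegrable_duhamel_integrand hs (hf.mono (prod_mono hIoo subset_rfl))
    (fun r hr => hM r (hIoo hr)) x
  have hIt0s := hIt.mono_set (uIcc_subset_uIcc_left (mem_uIcc_of_le hs hst))
  have hIts := hIt.mono_set (uIcc_subset_uIcc_right (mem_uIcc_of_le hs hst))
  rw [duhamel_eq_intervalIntegral (hs.trans hst), duhamel_eq_intervalIntegral hs,
    ← intervalIntegral.integral_add_adjacent_intervals hIt0s hIts,
    intervalIntegral.integral_sub hIt0s hIs]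
  ring

lemma abs_duhamel_sub_le {s t γ : ℝ} (hs : 0 ≤ s) (hst : s ≤ t) (hγ : γ ∈ Ioo 0 1)
    (hf : ContinuousOn (Function.uncurry f) (Ioo 0 t ×ˢ univ))
    (hM : ∀ r ∈ Ioo 0 t, ∀ y, |f r y| ≤ M) (x : E) :
    |duhamel N f t x - duhamel N f s x|
      ≤ M * (2 + 2 ^ N * (N / 2 + 4)) * (t - s) ^ γ * (s ^ (1 - γ) / (1 - γ))
        + M * (t - s) := by
  have htail : |∫ r in s..t, heatSemigroup N (t - r) (f r) x| ≤ M * (t - s) := by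
    have h := intervalIntegral.norm_integral_le_of_norm_le_const_ae
      (f := fun r => heatSemigroup N (t - r) (f r) x) (C := M) (a := s) (b := t) ?_
    · rwa [abs_of_nonneg (sub_nonneg.2 hst)] at h
    -- `r = t` must be discarded: `gaussK N 0` is a junk value, not a Dirac mass.
    filter_upwards [Measure.ae_ne volume t] with r hrt hr
    rw [uIoc_of_le hst] at hr
    have hr' : r ∈ Ioo 0 t := ⟨hs.trans_lt hr.1, hr.2.lt_of_ne hrt⟩
    exact abs_heatSemigroup_le (sub_pos.2 hr'.2) (hM r hr') x
  have hbulk :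
      |∫ r in 0..s, (heatSemigroup N (t - r) (f r) x - heatSemigroup N (s - r) (f r) x)|
        ≤ M * (2 + 2 ^ N * (N / 2 + 4)) * (t - s) ^ γ * (s ^ (1 - γ) / (1 - γ)) := by
    rw [← integral_sub_rpow_neg hγ.2,
      ← intervalIntegral.integral_const_mul (M * (2 + 2 ^ N * (N / 2 + 4)) * (t - s) ^ γ),
      ← Real.norm_eq_abs]
    refine intervalIntegral.norm_integral_le_of_norm_le hs ?_
      ((intervalIntegrable_sub_rpow_neg hγ.2).const_mul _)
    filter_upwards [Measure.ae_ne volume s] with r hrs hr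
    have hsr : 0 < s - r := sub_pos.2 (hr.2.lt_of_ne hrs)
    have hr' : r ∈ Ioo 0 t := ⟨hr.1, by linarith⟩
    have h := abs_heatSemigroup_sub_le_rpow (a := t - r) hsr (by linarith) hγ.1.le hγ.2.le
      (continuousOn_univ.1 (hf.uncurry_left r hr')).aestronglyMeasurable (hM r hr') x
    rw [norm_eq_abs]
    refine h.trans_eq ?_
    rw [show t - r - (s - r) = t - s by ring, div_rpow (sub_nonneg.2 hst) hsr.le,
      rpow_neg hsr.le]
    ring
  calc |duhamel N f t x - duhamel N f s x|
      ≤ |∫ r in 0..s, (heatSemigroup N (t - r) (f r) x - heatSemigroup N (s - r) (f r) x)|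
        + |∫ r in s..t, heatSemigroup N (t - r) (f r) x| := by
        rw [duhamel_sub_eq hs hst hf hM x]; exact abs_add_le _ _
    _ ≤ _ := add_le_add hbulk htail

lemma abs_duhamel_sub_le_rpow {T s t γ : ℝ} (hγ : γ ∈ Ioo 0 1)
    (hf : ContinuousOn (Function.uncurry f) (Icc 0 T ×ˢ univ))
    (hM : ∀ r ∈ Icc 0 T, ∀ y, |f r y| ≤ M) (hs : s ∈ Icc 0 T) (ht : t ∈ Icc 0 T) (hst : s ≤ t)
    (x : E) :
    |duhamel N f t x - duhamel N f s x|
      ≤ M * T ^ (1 - γ) * ((2 + 2 ^ N * (N / 2 + 4)) / (1 - γ) + 1) * (t - s) ^ γ := by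
  have hM0 : 0 ≤ M := (abs_nonneg _).trans (hM s hs x)
  have hγ1 : 0 < 1 - γ := sub_pos.2 hγ.2
  have hIoo : Ioo 0 t ⊆ Icc 0 T := Ioo_subset_Icc_self.trans (Icc_subset_Icc_right ht.2)
  have hts : t - s ≤ T ^ (1 - γ) * (t - s) ^ γ :=
    calc t - s = (t - s) ^ (1 - γ) * (t - s) ^ γ := by
          rw [← rpow_add' (sub_nonneg.2 hst) (by norm_num), sub_add_cancel, Real.rpow_one]
      _ ≤ T ^ (1 - γ) * (t - s) ^ γ := by
          gcongr
          linarith [hs.1, ht.2]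
  have hsT : s ^ (1 - γ) ≤ T ^ (1 - γ) := rpow_le_rpow hs.1 hs.2 hγ1.le
  calc |duhamel N f t x - duhamel N f s x|
      ≤ M * (2 + 2 ^ N * (N / 2 + 4)) * (t - s) ^ γ * (s ^ (1 - γ) / (1 - γ)) + M * (t - s) :=
        abs_duhamel_sub_le hs.1 hst hγ (hf.mono (prod_mono hIoo subset_rfl))
          (fun r hr => hM r (hIoo hr)) x
    _ ≤ M * (2 + 2 ^ N * (N / 2 + 4)) * (t - s) ^ γ * (T ^ (1 - γ) / (1 - γ))
        + M * (T ^ (1 - γ) * (t - s) ^ γ) := by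
        gcongr
    _ = M * T ^ (1 - γ) * ((2 + 2 ^ N * (N / 2 + 4)) / (1 - γ) + 1) * (t - s) ^ γ := by
        field_simp

end Duhamel

theorem stmt14_general (N : ℕ) (T : ℝ)
    (f : ℝ → EuclideanSpace ℝ (Fin N) → ℝ)
    -- `f(t) ∈ C_{b,u}(ℝ^N)` for each `t ∈ [0,T]`
    (hfb : ∃ C, ∀ t ∈ Icc 0 T, ∀ x, |f t x| ≤ C)
    (hfu : ∀ t ∈ Icc 0 T, UniformContinuous (f t))
    -- `t ↦ f(t)` is continuous `[0,T] → C_{b,u}(ℝ^N)` in the supremum norm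
    (hfc : ∀ t ∈ Icc 0 T, ∀ ε > (0 : ℝ), ∃ η > (0 : ℝ), ∀ s ∈ Icc 0 T, |s - t| < η →
      ∀ x, |f s x - f t x| ≤ ε)
    (γ : ℝ) (hγ : γ ∈ Ioo (0 : ℝ) 1) :
    ∃ C : ℝ, ∀ s ∈ Icc 0 T, ∀ t ∈ Icc 0 T, ∀ x,
      |duhamel N f t x - duhamel N f s x| ≤ C * |t - s| ^ γ := by
  obtain ⟨M, hM⟩ := hfb
  have hf : ContinuousOn (Function.uncurry f) (Icc 0 T ×ˢ univ) :=
    continuousOn_uncurry_of_uniform (fun t ht => (hfu t ht).continuous) hfc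
  refine ⟨M * T ^ (1 - γ) * ((2 + 2 ^ N * (N / 2 + 4)) / (1 - γ) + 1), fun s hs t ht x => ?_⟩
  rcases le_total s t with hst | hts
  · rw [abs_of_nonneg (sub_nonneg.2 hst)]
    exact abs_duhamel_sub_le_rpow hγ hf hM hs ht hst x
  · rw [abs_sub_comm, abs_sub_comm t, abs_of_nonneg (sub_nonneg.2 hts)]
    exact abs_duhamel_sub_le_rpow hγ hf hM ht hs hts x

/-- Lemma C.2 on `ℝ^N`.  For `f ∈ C([0,T], C_{b,u}(ℝ^N))`, the map
`v(t) = ∫₀ᵗ K(t-s,·) ⋆ f(s) ds` is `γ`-Hölder continuous `[0,T] → C_{b,u}(ℝ^N)` for every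
`γ ∈ (0,1)`. -/
theorem stmt14 (N : ℕ) (hN : 1 ≤ N) (T : ℝ) (hT : 0 < T)
    (f : ℝ → EuclideanSpace ℝ (Fin N) → ℝ)
    -- `f(t) ∈ C_{b,u}(ℝ^N)` for each `t ∈ [0,T]`
    (hfb : ∃ C, ∀ t ∈ Icc 0 T, ∀ x, |f t x| ≤ C)
    (hfu : ∀ t ∈ Icc 0 T, UniformContinuous (f t))
    -- `t ↦ f(t)` is continuous `[0,T] → C_{b,u}(ℝ^N)` in the supremum norm
    (hfc : ∀ t ∈ Icc 0 T, ∀ ε > (0 : ℝ), ∃ η > (0 : ℝ), ∀ s ∈ Icc 0 T, |s - t| < η →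
      ∀ x, |f s x - f t x| ≤ ε)
    (γ : ℝ) (hγ : γ ∈ Ioo (0 : ℝ) 1) :
    ∃ C : ℝ, ∀ s ∈ Icc 0 T, ∀ t ∈ Icc 0 T, ∀ x,
      |duhamel N f t x - duhamel N f s x| ≤ C * |t - s| ^ γ :=
  stmt14_general N T f hfb hfu hfc γ hγ
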